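/- A BMS transformation b with data (M, α) maps the good cut of every translation onto the good cut of some translation (i.e. for every Hermitian H there is a Hermitian H' with b({(p, α_H(p))}) = {(p, α_{H'}(p))}) if and only if α is itself a translation. Consequently the set of BMS transformations whose data (M, α) has α a translation is exactly the subgroup of 𝓑 preserving the family of good cuts (the Poincaré subgroup of 𝓑). -/
import Mathlib


noncomputable section

open Matrix

/-- `SL(2, ℂ)`. -/
abbrev SL2C := Matrix.SpecialLinearGroup (Fin 2) ℂ

/-- The complex projective line `ℙ¹(ℂ)`, the projectivization of `ℂ²`. -/
abbrev P1C := Projectivization ℂ (Fin 2 → ℂ)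

instance : Fact (Even (Fintype.card (Fin 2))) := ⟨⟨1, rfl⟩⟩

/-- The squared standard Hermitian norm `‖v‖²` of `v ∈ ℂ²`. -/
def hermNormSq (v : Fin 2 → ℂ) : ℝ := (star v ⬝ᵥ v).re

theorem SL2C.mulVec_ne_zero (M : SL2C) {v : Fin 2 → ℂ} (hv : v ≠ 0) :
    (M : Matrix (Fin 2) (Fin 2) ℂ).mulVec v ≠ 0 := by
  intro h
  apply hv
  have hMM : ((M⁻¹ : SL2C) : Matrix (Fin 2) (Fin 2) ℂ) * (M : Matrix (Fin 2) (Fin 2) ℂ) = 1 := by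
    rw [← Matrix.SpecialLinearGroup.coe_mul, inv_mul_cancel,
      Matrix.SpecialLinearGroup.coe_one]
  calc v = (((M⁻¹ : SL2C) : Matrix (Fin 2) (Fin 2) ℂ) *
          (M : Matrix (Fin 2) (Fin 2) ℂ)).mulVec v := by rw [hMM, Matrix.one_mulVec]
    _ = ((M⁻¹ : SL2C) : Matrix (Fin 2) (Fin 2) ℂ).mulVec
          ((M : Matrix (Fin 2) (Fin 2) ℂ).mulVec v) := by rw [Matrix.mulVec_mulVec]
    _ = 0 := by rw [h, Matrix.mulVec_zero]

/-- The action of `SL(2, ℂ)` on `ℙ¹(ℂ)`: `M • [v] = [M v]`. -/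
def mobAct (M : SL2C) (p : P1C) : P1C :=
  Projectivization.mk ℂ ((M : Matrix (Fin 2) (Fin 2) ℂ).mulVec p.rep)
    (SL2C.mulVec_ne_zero M p.rep_nonzero)

/-- The conformal factor `K_M : ℙ¹(ℂ) → ℝ`, `K_M([v]) = ‖v‖² / ‖M v‖²`. -/
def Kconf (M : SL2C) (p : P1C) : ℝ :=
  hermNormSq p.rep / hermNormSq ((M : Matrix (Fin 2) (Fin 2) ℂ).mulVec p.rep)

/-- The BMS transformation with data `(M, α)`:
`(p, u) ↦ (M • p, K_M(p)·(u + α(p)))`. -/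
def bms (M : SL2C) (α : P1C → ℝ) : P1C × ℝ → P1C × ℝ :=
  fun q => (mobAct M q.1, Kconf M q.1 * (q.2 + α q.1))

/-- `σ_M(α)(p) = K_M(p)⁻¹ · α(M • p)`. -/
def sigmaAct (M : SL2C) (α : P1C → ℝ) : P1C → ℝ :=
  fun p => (Kconf M p)⁻¹ * α (mobAct M p)

/-- The BMS group `𝓑`, as the set of all BMS transformations. -/
def BMSSet : Set ((P1C × ℝ) → (P1C × ℝ)) := {f | ∃ M α, f = bms M α}

/-- The supertranslations `𝓢`: BMS transformations with data `(1, α)`. -/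
def Supertranslations : Set ((P1C × ℝ) → (P1C × ℝ)) := {f | ∃ α, f = bms 1 α}

/-- The 'Lorentz' elements `𝓛`: BMS transformations with data `(M, 0)`. -/
def LorentzSet : Set ((P1C × ℝ) → (P1C × ℝ)) := {f | ∃ M, f = bms M 0}

/-- The translation function `α_H([v]) = (vᴴ H v)/‖v‖²` attached to a Hermitian matrix `H`. -/
def transl (H : Matrix (Fin 2) (Fin 2) ℂ) : P1C → ℝ :=
  fun p => (star p.rep ⬝ᵥ H.mulVec p.rep).re / hermNormSq p.rep

/-- `α : ℙ¹(ℂ) → ℝ` is a translation if `α = α_H` for some Hermitian `H`. -/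
def IsTranslationFn (α : P1C → ℝ) : Prop :=
  ∃ H : Matrix (Fin 2) (Fin 2) ℂ, H.IsHermitian ∧ α = transl H

/-- The translation subgroup `𝓣`: BMS transformations with data `(±1, α_H)`. -/
def TranslSet : Set ((P1C × ℝ) → (P1C × ℝ)) :=
  {f | ∃ (M : SL2C) (α : P1C → ℝ), (M = 1 ∨ M = -1) ∧ IsTranslationFn α ∧ f = bms M α}

/-- `PSL(2, ℂ)`, the quotient of `SL(2, ℂ)` by its center `{1, -1}`. -/
abbrev PSL2C := SL2C ⧸ Subgroup.center SL2C

/-- The good cut of a translation: the graph of `α_H` in `ℙ¹(ℂ) × ℝ`. -/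
def goodCut (H : Matrix (Fin 2) (Fin 2) ℂ) : Set (P1C × ℝ) :=
  {q | q.2 = transl H q.1}


/-! ### Auxiliary lemmas -/

lemma quad_smul (H : Matrix (Fin 2) (Fin 2) ℂ) (c : ℂ) (v : Fin 2 → ℂ) :
    star (c • v) ⬝ᵥ H.mulVec (c • v) = (Complex.normSq c : ℂ) * (star v ⬝ᵥ H.mulVec v) := by
  rw [star_smul, Matrix.mulVec_smul, smul_dotProduct, dotProduct_smul]
  rw [smul_smul, smul_eq_mul, Complex.star_def, ← Complex.normSq_eq_conj_mul_self]

lemma dot_smul' (c : ℂ) (v : Fin 2 → ℂ) :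
    star (c • v) ⬝ᵥ (c • v) = (Complex.normSq c : ℂ) * (star v ⬝ᵥ v) := by
  rw [star_smul, smul_dotProduct, dotProduct_smul]
  rw [smul_smul, smul_eq_mul, Complex.star_def, ← Complex.normSq_eq_conj_mul_self]

lemma hermNormSq_smul (c : ℂ) (v : Fin 2 → ℂ) :
    hermNormSq (c • v) = Complex.normSq c * hermNormSq v := by
  unfold hermNormSq
  rw [dot_smul', Complex.re_ofReal_mul]

lemma hermNormSq_pos {v : Fin 2 → ℂ} (hv : v ≠ 0) : 0 < hermNormSq v := by
  have h : hermNormSq v = ∑ i, Complex.normSq (v i) := by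
    unfold hermNormSq
    simp [dotProduct, Complex.star_def, ← Complex.normSq_eq_conj_mul_self]
  rw [h]
  obtain ⟨i, hi⟩ := Function.ne_iff.mp hv
  exact Finset.sum_pos' (fun j _ => Complex.normSq_nonneg _)
    ⟨i, Finset.mem_univ i, by simpa using Complex.normSq_pos.mpr hi⟩

lemma quad_mulVec (A H : Matrix (Fin 2) (Fin 2) ℂ) (v : Fin 2 → ℂ) :
    star (A.mulVec v) ⬝ᵥ H.mulVec (A.mulVec v) = star v ⬝ᵥ (Aᴴ * H * A).mulVec v := by
  rw [Matrix.star_mulVec, Matrix.mulVec_mulVec, Matrix.dotProduct_mulVec,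
    Matrix.vecMul_vecMul, ← Matrix.dotProduct_mulVec, Matrix.mul_assoc]

lemma transl_mk (H : Matrix (Fin 2) (Fin 2) ℂ) {v : Fin 2 → ℂ} (hv : v ≠ 0) :
    transl H (Projectivization.mk ℂ v hv) = (star v ⬝ᵥ H.mulVec v).re / hermNormSq v := by
  obtain ⟨a, ha⟩ := Projectivization.exists_smul_eq_mk_rep ℂ v hv
  have ha' : (Projectivization.mk ℂ v hv).rep = (a : ℂ) • v := by
    rw [← ha]; rfl
  have hns : Complex.normSq (a : ℂ) ≠ 0 :=
    (Complex.normSq_pos.mpr (Units.ne_zero a)).ne'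
  unfold transl
  rw [ha', quad_smul, hermNormSq_smul, Complex.re_ofReal_mul,
    mul_div_mul_left _ _ hns]

lemma transl_add (A B : Matrix (Fin 2) (Fin 2) ℂ) (p : P1C) :
    transl (A + B) p = transl A p + transl B p := by
  unfold transl
  rw [Matrix.add_mulVec, dotProduct_add, Complex.add_re, add_div]

lemma transl_zero (p : P1C) : transl 0 p = 0 := by
  simp [transl, Matrix.zero_mulVec]

lemma mobAct_mk (M : SL2C) {v : Fin 2 → ℂ} (hv : v ≠ 0) :
    mobAct M (Projectivization.mk ℂ v hv) =
      Projectivization.mk ℂ ((M : Matrix (Fin 2) (Fin 2) ℂ).mulVec v)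
        (SL2C.mulVec_ne_zero M hv) := by
  obtain ⟨a, ha⟩ := Projectivization.exists_smul_eq_mk_rep ℂ v hv
  have ha' : (Projectivization.mk ℂ v hv).rep = (a : ℂ) • v := by
    rw [← ha]; rfl
  unfold mobAct
  rw [Projectivization.mk_eq_mk_iff]
  exact ⟨a, by rw [ha', Matrix.mulVec_smul]; rfl⟩

lemma Kconf_mk (M : SL2C) {v : Fin 2 → ℂ} (hv : v ≠ 0) :
    Kconf M (Projectivization.mk ℂ v hv) =
      hermNormSq v / hermNormSq ((M : Matrix (Fin 2) (Fin 2) ℂ).mulVec v) := by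
  obtain ⟨a, ha⟩ := Projectivization.exists_smul_eq_mk_rep ℂ v hv
  have ha' : (Projectivization.mk ℂ v hv).rep = (a : ℂ) • v := by
    rw [← ha]; rfl
  have hns : Complex.normSq (a : ℂ) ≠ 0 :=
    (Complex.normSq_pos.mpr (Units.ne_zero a)).ne'
  unfold Kconf
  rw [ha', Matrix.mulVec_smul, hermNormSq_smul, hermNormSq_smul,
    mul_div_mul_left _ _ hns]

lemma Kconf_pos (M : SL2C) (p : P1C) : 0 < Kconf M p :=
  div_pos (hermNormSq_pos p.rep_nonzero)
    (hermNormSq_pos (SL2C.mulVec_ne_zero M p.rep_nonzero))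

lemma mobAct_inv (M : SL2C) (q : P1C) : mobAct M (mobAct M⁻¹ q) = q := by
  have hMM : (M : Matrix (Fin 2) (Fin 2) ℂ) * ((M⁻¹ : SL2C) : Matrix (Fin 2) (Fin 2) ℂ) = 1 := by
    rw [← Matrix.SpecialLinearGroup.coe_mul, mul_inv_cancel,
      Matrix.SpecialLinearGroup.coe_one]
  show mobAct M (Projectivization.mk ℂ _ _) = q
  rw [mobAct_mk]
  conv_rhs => rw [← Projectivization.mk_rep q]
  rw [Projectivization.mk_eq_mk_iff]
  exact ⟨1, by rw [one_smul, Matrix.mulVec_mulVec, hMM, Matrix.one_mulVec]⟩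

/-- The key identity: `transl H' (M • p) = K_M(p) · transl (Mᴴ H' M) p`. -/
lemma main_id (M : SL2C) (H' : Matrix (Fin 2) (Fin 2) ℂ) (p : P1C) :
    transl H' (mobAct M p) =
      Kconf M p * transl ((M : Matrix (Fin 2) (Fin 2) ℂ)ᴴ * H' * M) p := by
  have hv : p.rep ≠ 0 := p.rep_nonzero
  have h1 : mobAct M p = Projectivization.mk ℂ ((M : Matrix (Fin 2) (Fin 2) ℂ).mulVec p.rep)
      (SL2C.mulVec_ne_zero M hv) := rfl
  rw [h1, transl_mk, quad_mulVec]
  unfold Kconf transl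
  have ha := (hermNormSq_pos hv).ne'
  have hb := (hermNormSq_pos (SL2C.mulVec_ne_zero M hv)).ne'
  field_simp

lemma isHermitian_conj (A H : Matrix (Fin 2) (Fin 2) ℂ) (hH : H.IsHermitian) :
    (Aᴴ * H * A).IsHermitian := by
  unfold Matrix.IsHermitian at *
  rw [Matrix.conjTranspose_mul, Matrix.conjTranspose_mul, Matrix.conjTranspose_conjTranspose,
    hH, Matrix.mul_assoc]

/-- Pointwise form of the backward direction. -/
lemma pointwise_id (M : SL2C) (B : Matrix (Fin 2) (Fin 2) ℂ) (p : P1C) :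
    Kconf M p * transl B p =
      transl ((((M⁻¹ : SL2C) : Matrix (Fin 2) (Fin 2) ℂ))ᴴ * B * ((M⁻¹ : SL2C) : Matrix (Fin 2) (Fin 2) ℂ)) (mobAct M p) := by
  have hNM : ((M⁻¹ : SL2C) : Matrix (Fin 2) (Fin 2) ℂ) * (M : Matrix (Fin 2) (Fin 2) ℂ) = 1 := by
    rw [← Matrix.SpecialLinearGroup.coe_mul, inv_mul_cancel, Matrix.SpecialLinearGroup.coe_one]
  rw [main_id]
  congr 2
  symm
  calc (M : Matrix (Fin 2) (Fin 2) ℂ)ᴴ *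
        (((M⁻¹ : SL2C) : Matrix (Fin 2) (Fin 2) ℂ)ᴴ * B * ((M⁻¹ : SL2C) : Matrix (Fin 2) (Fin 2) ℂ)) *
        (M : Matrix (Fin 2) (Fin 2) ℂ)
      = (((M⁻¹ : SL2C) : Matrix (Fin 2) (Fin 2) ℂ) * (M : Matrix (Fin 2) (Fin 2) ℂ))ᴴ * B *
        (((M⁻¹ : SL2C) : Matrix (Fin 2) (Fin 2) ℂ) * (M : Matrix (Fin 2) (Fin 2) ℂ)) := by
        rw [Matrix.conjTranspose_mul]; noncomm_ring
    _ = B := by rw [hNM]; simp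

/-- A BMS transformation with data `(M, α)` maps the good cut of every translation onto
the good cut of some translation iff `α` is itself a translation; consequently the BMS
transformations whose data has `α` a translation are exactly the elements of `𝓑`
preserving the family of good cuts (the Poincaré subgroup of `𝓑`). -/
theorem good_cuts_poincare :
    (∀ (M : SL2C) (α : P1C → ℝ),
      (∀ H : Matrix (Fin 2) (Fin 2) ℂ, H.IsHermitian →
        ∃ H' : Matrix (Fin 2) (Fin 2) ℂ, H'.IsHermitian ∧
          bms M α '' goodCut H = goodCut H') ↔ IsTranslationFn α) ∧
    ({f | ∃ (M : SL2C) (α : P1C → ℝ), IsTranslationFn α ∧ f = bms M α} =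
      {f | f ∈ BMSSet ∧ ∀ H : Matrix (Fin 2) (Fin 2) ℂ, H.IsHermitian →
        ∃ H' : Matrix (Fin 2) (Fin 2) ℂ, H'.IsHermitian ∧ f '' goodCut H = goodCut H'}) := by
  have part1 : ∀ (M : SL2C) (α : P1C → ℝ),
      (∀ H : Matrix (Fin 2) (Fin 2) ℂ, H.IsHermitian →
        ∃ H' : Matrix (Fin 2) (Fin 2) ℂ, H'.IsHermitian ∧
          bms M α '' goodCut H = goodCut H') ↔ IsTranslationFn α := by
    intro M α
    constructor
    · intro h
      obtain ⟨H', hH', him⟩ := h 0 Matrix.isHermitian_zero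
      refine ⟨(M : Matrix (Fin 2) (Fin 2) ℂ)ᴴ * H' * (M : Matrix (Fin 2) (Fin 2) ℂ),
        isHermitian_conj _ _ hH', funext fun p => ?_⟩
      have hmem : ((p, (0:ℝ)) : P1C × ℝ) ∈ goodCut 0 := by
        show (0:ℝ) = transl 0 p
        rw [transl_zero]
      have h2 : bms M α (p, 0) ∈ goodCut H' := him ▸ Set.mem_image_of_mem _ hmem
      have h3 : Kconf M p * ((0:ℝ) + α p) = transl H' (mobAct M p) := h2
      rw [main_id, zero_add] at h3
      exact mul_left_cancel₀ (Kconf_pos M p).ne' h3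
    · rintro ⟨G, hG, rfl⟩ H hH
      refine ⟨(((M⁻¹ : SL2C) : Matrix (Fin 2) (Fin 2) ℂ))ᴴ * (H + G) *
        ((M⁻¹ : SL2C) : Matrix (Fin 2) (Fin 2) ℂ), isHermitian_conj _ _ (hH.add hG), ?_⟩
      ext q
      constructor
      · rintro ⟨⟨p, u⟩, hu, rfl⟩
        have hu' : u = transl H p := hu
        show Kconf M p * (u + transl G p) = transl _ (mobAct M p)
        rw [hu', ← transl_add, pointwise_id]
      · intro hq
        refine ⟨(mobAct M⁻¹ q.1, transl H (mobAct M⁻¹ q.1)), rfl, ?_⟩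
        have h1 : mobAct M (mobAct M⁻¹ q.1) = q.1 := mobAct_inv M q.1
        have h2 : Kconf M (mobAct M⁻¹ q.1) *
            (transl H (mobAct M⁻¹ q.1) + transl G (mobAct M⁻¹ q.1)) = q.2 := by
          rw [← transl_add, pointwise_id, h1]
          exact hq.symm
        show (mobAct M (mobAct M⁻¹ q.1), _) = q
        rw [h1, h2]
  refine ⟨part1, ?_⟩
  ext f
  constructor
  · rintro ⟨M, α, hα, rfl⟩
    exact ⟨⟨M, α, rfl⟩, (part1 M α).mpr hα⟩
  · rintro ⟨⟨M, α, rfl⟩, hprop⟩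
    exact ⟨M, α, (part1 M α).mp hprop, rfl⟩
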